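/- Let P be a two-user q-ary input multiple-access channel (q prime). Then (1/2)𝕀(P⁻) + (1/2)𝕀(P⁺) ⊆ 𝕀(P), where the left-hand side denotes the set sum { (1/2)a + (1/2)b : a ∈ 𝕀(P⁻), b ∈ 𝕀(P⁺) }. Moreover, there exists a point (R₁,R₂) ∈ (1/2)𝕀(P⁻) + (1/2)𝕀(P⁺) with R₁ + R₂ = I⁽¹²⁾(P), i.e. lying on the dominant face of 𝕀(P). -/

import Mathlib

open Finset

namespace PolarMAC

/-- A two-user `q`-ary input multiple-access channel: an arbitrary finite output
alphabet `Y` together with transition probabilities `P x w y = P(y | x, w)`. -/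
structure MAC (q : ℕ) where
  Y : Type
  [fintypeY : Fintype Y]
  P : ZMod q → ZMod q → Y → ℝ

attribute [instance] MAC.fintypeY

/-- `M` is a genuine MAC: entries nonnegative and rows summing to one. -/
def IsMAC {q : ℕ} [Fact (Nat.Prime q)] (M : MAC q) : Prop :=
  (∀ x w y, 0 ≤ M.P x w y) ∧ ∀ x w, ∑ y, M.P x w y = 1

/-- Entropy (base `q`) of a pmf on a finite type. -/
noncomputable def Hq (q : ℕ) {α : Type*} [Fintype α] (p : α → ℝ) : ℝ :=
  ∑ a, -(p a * Real.logb q (p a))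

/-- Mutual information (base `q`) between the two coordinates of a joint pmf. -/
noncomputable def MIq (q : ℕ) {α β : Type*} [Fintype α] [Fintype β] (p : α → β → ℝ) : ℝ :=
  Hq q (fun a => ∑ b, p a b) + Hq q (fun b => ∑ a, p a b) - Hq q (fun ab : α × β => p ab.1 ab.2)

variable (q : ℕ) [Fact (Nat.Prime q)]

/-- `I⁽¹⁾(P) = I(X; Y W)` for independent uniform inputs. -/
noncomputable def I1 (M : MAC q) : ℝ :=
  MIq q (fun (x : ZMod q) (wy : ZMod q × M.Y) => M.P x wy.1 wy.2 / (q : ℝ) ^ 2)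

/-- `I⁽²⁾(P) = I(W; Y X)` for independent uniform inputs. -/
noncomputable def I2 (M : MAC q) : ℝ :=
  MIq q (fun (w : ZMod q) (xy : ZMod q × M.Y) => M.P xy.1 w xy.2 / (q : ℝ) ^ 2)

/-- `I⁽¹²⁾(P) = I(X W; Y)` for independent uniform inputs. -/
noncomputable def I12 (M : MAC q) : ℝ :=
  MIq q (fun (xw : ZMod q × ZMod q) (y : M.Y) => M.P xw.1 xw.2 y / (q : ℝ) ^ 2)

/-- `K(P) = (I⁽¹⁾(P), I⁽²⁾(P), I⁽¹²⁾(P)) ∈ ℝ³`, with the Euclidean norm. -/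
noncomputable def Kvec (M : MAC q) : EuclideanSpace ℝ (Fin 3) :=
  WithLp.toLp 2 ![I1 q M, I2 q M, I12 q M]

/-- The transform `P⁻(y₁,y₂ | u₁,v₁) = q⁻² ∑_{u₂,v₂} P(y₁|u₁+u₂, v₁+v₂) P(y₂|u₂,v₂)`. -/
noncomputable def minusT (M : MAC q) : MAC q where
  Y := M.Y × M.Y
  P := fun u₁ v₁ y =>
    ((q : ℝ) ^ 2)⁻¹ * ∑ u₂, ∑ v₂, M.P (u₁ + u₂) (v₁ + v₂) y.1 * M.P u₂ v₂ y.2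

/-- The transform `P⁺(y₁,y₂,u₁,v₁ | u₂,v₂) = q⁻² P(y₁|u₁+u₂, v₁+v₂) P(y₂|u₂,v₂)`,
with output `((y₁, y₂), (u₁, v₁))`. -/
noncomputable def plusT (M : MAC q) : MAC q where
  Y := (M.Y × M.Y) × ZMod q × ZMod q
  P := fun u₂ v₂ z =>
    ((q : ℝ) ^ 2)⁻¹ * (M.P (z.2.1 + u₂) (z.2.2 + v₂) z.1.1 * M.P u₂ v₂ z.1.2)


/-- The uniform-input rate region
`𝕀(P) = {(R₁,R₂) : 0 ≤ R₁ ≤ I⁽¹⁾(P), 0 ≤ R₂ ≤ I⁽²⁾(P), R₁+R₂ ≤ I⁽¹²⁾(P)}`. -/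
noncomputable def rateRegion (M : MAC q) : Set (ℝ × ℝ) :=
  {r : ℝ × ℝ | 0 ≤ r.1 ∧ r.1 ≤ I1 q M ∧ 0 ≤ r.2 ∧ r.2 ≤ I2 q M ∧ r.1 + r.2 ≤ I12 q M}


/-!
Two independent uses `(X₁, W₁, Y₁)`, `(X₂, W₂, Y₂)` of `P` with uniform inputs realise both
transforms at once: with `U₁ = X₁ - X₂`, `V₁ = W₁ - W₂`, `U₂ = X₂`, `V₂ = W₂`, the triple
`(U₁, V₁, Y₁Y₂)` is distributed as input, input and output of `P⁻`, and `(U₂, V₂, Y₁Y₂U₁V₁)` as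
those of `P⁺`. Every rate then becomes a combination of entropies of functions of these variables.
The chain rule gives `I⁽¹²⁾(P⁻) + I⁽¹²⁾(P⁺) = I(U₁V₁U₂V₂; Y₁Y₂) = 2 I⁽¹²⁾(P)`, and since adding
`V₂` to the observation can only increase `I(U₁; Y₁Y₂V₁)` (submodularity of entropy),
`I⁽¹⁾(P⁻) + I⁽¹⁾(P⁺) ≤ I(U₁U₂; Y₁Y₂V₁V₂) = 2 I⁽¹⁾(P)`; symmetrically for `I⁽²⁾`. So averages of
points of `𝕀(P⁻)` and `𝕀(P⁺)` lie in `𝕀(P)`, and the average of the corners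
`(I⁽¹⁾, I⁽¹²⁾ - I⁽¹⁾)` of the two regions lies on the dominant face of `𝕀(P)`.
-/

open Real

noncomputable def entropy {α : Type*} [Fintype α] (p : α → ℝ) : ℝ := ∑ a, negMulLog (p a)

open Classical in
noncomputable def law {Ω α : Type*} [Fintype Ω] (μ : Ω → ℝ) (F : Ω → α) (a : α) : ℝ :=
  ∑ ω, if F ω = a then μ ω else 0

section Entropy

variable {Ω Ω' α β γ : Type*} [Fintype Ω]

lemma law_apply [DecidableEq α] (μ : Ω → ℝ) (F : Ω → α) (a : α) :
    law μ F a = ∑ ω, if F ω = a then μ ω else 0 := by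
  unfold law
  congr!

lemma law_nonneg {μ : Ω → ℝ} (hμ : ∀ ω, 0 ≤ μ ω) (F : Ω → α) (a : α) : 0 ≤ law μ F a := by
  classical
  rw [law_apply]
  exact Finset.sum_nonneg fun ω _ => by split_ifs <;> simp [hμ]

lemma le_law_apply {μ : Ω → ℝ} (hμ : ∀ ω, 0 ≤ μ ω) (F : Ω → α) (ω : Ω) :
    μ ω ≤ law μ F (F ω) := by
  classical
  rw [law_apply]
  exact (if_pos rfl).symm.trans_le <| Finset.single_le_sum
    (f := fun ω' => if F ω' = F ω then μ ω' else 0)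
    (fun ω' _ => by split_ifs <;> simp [hμ]) (Finset.mem_univ ω)

lemma sum_law_mul [Fintype α] (μ : Ω → ℝ) (F : Ω → α) (φ : α → ℝ) :
    ∑ a, law μ F a * φ a = ∑ ω, μ ω * φ (F ω) := by
  classical
  simp only [law_apply, Finset.sum_mul, ite_mul, zero_mul]
  rw [Finset.sum_comm]
  exact Finset.sum_congr rfl fun ω _ => by simp

lemma sum_law [Fintype α] (μ : Ω → ℝ) (F : Ω → α) : ∑ a, law μ F a = ∑ ω, μ ω := by
  simpa using sum_law_mul μ F 1

lemma law_comp [Fintype α] (μ : Ω → ℝ) (F : Ω → α) (φ : α → β) :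
    law μ (fun ω => φ (F ω)) = law (law μ F) φ := by
  classical
  funext b
  simpa [law_apply, Finset.sum_ite] using
    (sum_law_mul μ F fun a => if φ a = b then 1 else 0).symm

lemma law_le_law_comp {μ : Ω → ℝ} (hμ : ∀ ω, 0 ≤ μ ω) (F : Ω → α) (φ : α → β) (a : α) :
    law μ F a ≤ law μ (fun ω => φ (F ω)) (φ a) := by
  classical
  rw [law_apply, law_apply]
  refine Finset.sum_le_sum fun ω _ => ?_
  by_cases h : F ω = a
  · simp [h]
  · rw [if_neg h]
    split_ifs <;> simp [hμ]

lemma law_id (μ : Ω → ℝ) : law μ id = μ := by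
  classical
  funext a
  simp [law_apply]

lemma law_equiv (μ : Ω → ℝ) (e : Ω ≃ α) : law μ e = μ ∘ e.symm := by
  classical
  funext a
  rw [law_apply, Finset.sum_eq_single (e.symm a)] <;> simp +contextual [← e.eq_symm_apply]

lemma law_fst [Fintype α] [Fintype β] (p : α × β → ℝ) (a : α) :
    law p Prod.fst a = ∑ b, p (a, b) := by
  classical
  rw [law_apply, Fintype.sum_prod_type, Finset.sum_eq_single a] <;> simp +contextual

lemma law_snd [Fintype α] [Fintype β] (p : α × β → ℝ) (b : β) :
    law p Prod.snd b = ∑ a, p (a, b) := by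
  classical
  simp [law_apply, Fintype.sum_prod_type]

lemma sum_law_pair_left [Fintype α] [Fintype β] (μ : Ω → ℝ) (f : Ω → α) (g : Ω → β) (b : β) :
    ∑ a, law μ (fun ω => (f ω, g ω)) (a, b) = law μ g b := by
  rw [← law_snd, ← law_comp]

lemma sum_law_pair_right [Fintype α] [Fintype β] (μ : Ω → ℝ) (f : Ω → α) (g : Ω → β) (a : α) :
    ∑ b, law μ (fun ω => (f ω, g ω)) (a, b) = law μ f a := by
  rw [← law_fst (law μ _), ← law_comp]

lemma law_prodMap [Fintype Ω'] (μ : Ω → ℝ) (ν : Ω' → ℝ) (f : Ω → α) (g : Ω' → β) (a : α)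
    (b : β) : law (fun ω : Ω × Ω' => μ ω.1 * ν ω.2) (Prod.map f g) (a, b) =
      law μ f a * law ν g b := by
  classical
  simp only [law_apply, Fintype.sum_prod_type, Finset.sum_mul_sum, Prod.map, Prod.mk.injEq,
    ite_and, ite_mul, mul_ite, zero_mul, mul_zero]
  exact Finset.sum_congr rfl fun _ _ => Finset.sum_congr rfl fun _ _ => by split_ifs <;> rfl

lemma entropy_const [Fintype α] (c : ℝ) :
    entropy (fun _ : α => c) = Fintype.card α * negMulLog c := by
  simp [entropy]

lemma entropy_prod_mul [Fintype α] [Fintype β] {p : α → ℝ} {r : β → ℝ} (hp : ∑ a, p a = 1)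
    (hr : ∑ b, r b = 1) : entropy (fun x : α × β => p x.1 * r x.2) = entropy p + entropy r := by
  simp only [entropy, Fintype.sum_prod_type, negMulLog_mul, Finset.sum_add_distrib,
    ← Finset.mul_sum, ← Finset.sum_mul, hp, hr, one_mul]

lemma entropy_law_eq_neg_sum [Fintype α] (μ : Ω → ℝ) (F : Ω → α) :
    entropy (law μ F) = -∑ ω, μ ω * log (law μ F (F ω)) := by
  rw [← sum_law_mul μ F fun a => log (law μ F a), entropy, ← Finset.sum_neg_distrib]
  simp only [negMulLog, neg_mul]

lemma entropy_law_equiv [Fintype α] [Fintype β] (μ : Ω → ℝ) (F : Ω → α) (e : α ≃ β) :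
    entropy (law μ fun ω => e (F ω)) = entropy (law μ F) := by
  rw [law_comp, law_equiv]
  exact Fintype.sum_equiv e.symm _ _ fun _ => rfl

lemma entropy_law_prodMap [Fintype Ω'] [Fintype α] [Fintype β] {μ : Ω → ℝ} {ν : Ω' → ℝ}
    (hμ : ∑ ω, μ ω = 1) (hν : ∑ ω, ν ω = 1) (f : Ω → α) (g : Ω' → β) :
    entropy (law (fun ω : Ω × Ω' => μ ω.1 * ν ω.2) (Prod.map f g)) =
      entropy (law μ f) + entropy (law ν g) := by
  have h : law (fun ω : Ω × Ω' => μ ω.1 * ν ω.2) (Prod.map f g) =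
      fun x => law μ f x.1 * law ν g x.2 := funext fun x => law_prodMap μ ν f g x.1 x.2
  rw [h, entropy_prod_mul] <;> rwa [sum_law]

lemma entropy_law_comp_le [Fintype α] [Fintype β] {μ : Ω → ℝ} (hμ : ∀ ω, 0 ≤ μ ω) (F : Ω → α)
    (φ : α → β) : entropy (law μ fun ω => φ (F ω)) ≤ entropy (law μ F) := by
  rw [entropy_law_eq_neg_sum, entropy_law_eq_neg_sum, neg_le_neg_iff]
  refine Finset.sum_le_sum fun ω _ => ?_
  rcases (hμ ω).eq_or_lt with h0 | h0
  · simp [← h0]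
  · exact mul_le_mul_of_nonneg_left (log_le_log (h0.trans_le (le_law_apply hμ F ω))
      (law_le_law_comp hμ F φ (F ω))) h0.le

lemma entropy_law_eq_of_comp [Fintype α] [Fintype β] {μ : Ω → ℝ} (hμ : ∀ ω, 0 ≤ μ ω)
    {F : Ω → α} {G : Ω → β} (φ : β → α) (ψ : α → β) (hF : ∀ ω, F ω = φ (G ω))
    (hG : ∀ ω, G ω = ψ (F ω)) : entropy (law μ F) = entropy (law μ G) := by
  refine le_antisymm ?_ ?_
  · rw [funext hF]
    exact entropy_law_comp_le hμ G φ
  · rw [funext hG]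
    exact entropy_law_comp_le hμ F ψ

lemma sum_mul_log_nonpos {ι : Type*} [Fintype ι] {w r : ι → ℝ} (hw : ∀ i, 0 ≤ w i)
    (hr : ∀ i, 0 < w i → 0 < r i) (h : ∑ i, w i * r i ≤ ∑ i, w i) :
    ∑ i, w i * log (r i) ≤ 0 := by
  have key : ∀ i, w i * log (r i) ≤ w i * r i - w i := fun i => by
    rcases (hw i).eq_or_lt with h0 | h0
    · simp [← h0]
    · nlinarith [log_le_sub_one_of_pos (hr i h0)]
  calc ∑ i, w i * log (r i) ≤ ∑ i, (w i * r i - w i) := Finset.sum_le_sum fun i _ => key i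
    _ ≤ 0 := by rw [Finset.sum_sub_distrib]; linarith

-- The ratio is the density, relative to the law of `(f, g, h)`, of the law under which `f` and
-- `h` are conditionally independent given `g`.
lemma sum_mul_law_ratio_le [Fintype α] [Fintype β] [Fintype γ] {μ : Ω → ℝ} (hμ : ∀ ω, 0 ≤ μ ω)
    (f : Ω → α) (g : Ω → β) (h : Ω → γ) :
    ∑ ω, μ ω * (law μ (fun ω => (f ω, g ω)) (f ω, g ω) * law μ (fun ω => (g ω, h ω)) (g ω, h ω) /
      (law μ g (g ω) * law μ (fun ω => (f ω, g ω, h ω)) (f ω, g ω, h ω))) ≤ ∑ ω, μ ω := by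
  set A := law μ fun ω => (f ω, g ω)
  set B := law μ g
  set C := law μ fun ω => (g ω, h ω)
  set D := law μ fun ω => (f ω, g ω, h ω)
  calc _ = ∑ x, D x * (A (x.1, x.2.1) * C x.2 / (B x.2.1 * D x)) :=
        (sum_law_mul μ _ fun x => A (x.1, x.2.1) * C x.2 / (B x.2.1 * D x)).symm
    _ ≤ ∑ x : α × β × γ, A (x.1, x.2.1) * C x.2 / B x.2.1 := by
      refine Finset.sum_le_sum fun x _ => ?_
      rcases eq_or_ne (D x) 0 with h0 | h0
      · rw [h0, zero_mul]
        exact div_nonneg (mul_nonneg (law_nonneg hμ _ _) (law_nonneg hμ _ _)) (law_nonneg hμ _ _)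
      · rw [mul_div_assoc', mul_comm (B _), ← div_div, mul_div_cancel_left₀ _ h0]
    _ = ∑ b, (∑ a, A (a, b)) * (∑ c, C (b, c)) / B b := by
      simp only [Fintype.sum_prod_type]
      rw [Finset.sum_comm]
      refine Finset.sum_congr rfl fun b _ => ?_
      simp only [Finset.sum_mul_sum, Finset.sum_div]
    _ = ∑ b, B b * B b / B b := by simp only [A, B, C, sum_law_pair_left, sum_law_pair_right]
    _ ≤ ∑ b, B b := Finset.sum_le_sum fun b _ => by rw [mul_self_div_self]
    _ = ∑ ω, μ ω := sum_law μ g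

lemma entropy_law_submodular [Fintype α] [Fintype β] [Fintype γ] {μ : Ω → ℝ}
    (hμ : ∀ ω, 0 ≤ μ ω) (f : Ω → α) (g : Ω → β) (h : Ω → γ) :
    entropy (law μ fun ω => (f ω, g ω, h ω)) + entropy (law μ g) ≤
      entropy (law μ fun ω => (f ω, g ω)) + entropy (law μ fun ω => (g ω, h ω)) := by
  set A := law μ fun ω => (f ω, g ω)
  set B := law μ g
  set C := law μ fun ω => (g ω, h ω)
  set D := law μ fun ω => (f ω, g ω, h ω)
  have hpos : ∀ ω, 0 < μ ω → 0 < A (f ω, g ω) ∧ 0 < B (g ω) ∧ 0 < C (g ω, h ω) ∧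
      0 < D (f ω, g ω, h ω) := fun ω h0 =>
    ⟨h0.trans_le (le_law_apply hμ _ ω), h0.trans_le (le_law_apply hμ _ ω),
      h0.trans_le (le_law_apply hμ _ ω), h0.trans_le (le_law_apply hμ _ ω)⟩
  have hlog : ∀ ω, μ ω * log (A (f ω, g ω) * C (g ω, h ω) / (B (g ω) * D (f ω, g ω, h ω))) =
      μ ω * log (A (f ω, g ω)) + μ ω * log (C (g ω, h ω)) - μ ω * log (B (g ω)) -
        μ ω * log (D (f ω, g ω, h ω)) := by
    intro ω
    rcases (hμ ω).eq_or_lt with h0 | h0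
    · simp [← h0]
    obtain ⟨hA, hB, hC, hD⟩ := hpos ω h0
    rw [log_div (mul_pos hA hC).ne' (mul_pos hB hD).ne', log_mul hA.ne' hC.ne',
      log_mul hB.ne' hD.ne']
    ring
  have gibbs : ∑ ω, μ ω * log (A (f ω, g ω) * C (g ω, h ω) / (B (g ω) * D (f ω, g ω, h ω))) ≤ 0 :=
    sum_mul_log_nonpos hμ (fun ω h0 => by
      obtain ⟨hA, hB, hC, hD⟩ := hpos ω h0
      exact div_pos (mul_pos hA hC) (mul_pos hB hD)) (sum_mul_law_ratio_le hμ f g h)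
  simp only [hlog, Finset.sum_sub_distrib, Finset.sum_add_distrib] at gibbs
  rw [entropy_law_eq_neg_sum, entropy_law_eq_neg_sum, entropy_law_eq_neg_sum,
    entropy_law_eq_neg_sum]
  linarith

lemma entropy_law_subadditive [Fintype α] [Fintype β] {μ : Ω → ℝ} (hμ : ∀ ω, 0 ≤ μ ω)
    (hμ1 : ∑ ω, μ ω = 1) (f : Ω → α) (g : Ω → β) :
    entropy (law μ fun ω => (f ω, g ω)) ≤ entropy (law μ f) + entropy (law μ g) := by
  have h := entropy_law_submodular hμ f (fun _ => ()) g
  have hunit : entropy (law μ fun _ => ()) = 0 := by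
    simp [entropy, law, hμ1]
  rwa [hunit, add_zero,
    entropy_law_eq_of_comp hμ (G := fun ω => (f ω, g ω)) (fun x => (x.1, (), x.2))
      (fun x => (x.1, x.2.2)) (fun _ => rfl) (fun _ => rfl),
    entropy_law_eq_of_comp hμ (G := f) (fun a => (a, ())) Prod.fst (fun _ => rfl) (fun _ => rfl),
    entropy_law_eq_of_comp hμ (G := g) (fun b => ((), b)) Prod.snd (fun _ => rfl)
      (fun _ => rfl)] at h

end Entropy

section Channel

lemma cast_q_ne_zero : (q : ℝ) ≠ 0 := by
  exact_mod_cast (Fact.out : q.Prime).ne_zero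

lemma log_q_pos : 0 < log (q : ℝ) :=
  log_pos (by exact_mod_cast (Fact.out : q.Prime).one_lt)

variable {q}

lemma Hq_mul_log {α : Type*} [Fintype α] (p : α → ℝ) : Hq q p * log q = entropy p := by
  have := (log_q_pos q).ne'
  simp only [Hq, entropy, negMulLog, logb, Finset.sum_mul]
  exact Finset.sum_congr rfl fun a _ => by field_simp

lemma MIq_mul_log {Ω α β : Type*} [Fintype Ω] [Fintype α] [Fintype β] {p : α → β → ℝ}
    {μ : Ω → ℝ} {F : Ω → α × β} (hF : law μ F = fun ab => p ab.1 ab.2) :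
    MIq q p * log q = entropy (law μ fun ω => (F ω).1) + entropy (law μ fun ω => (F ω).2) -
      entropy (law μ F) := by
  have h1 : (fun a => ∑ b, p a b) = law μ fun ω => (F ω).1 := by
    funext a
    rw [law_comp μ F Prod.fst, hF, law_fst]
  have h2 : (fun b => ∑ a, p a b) = law μ fun ω => (F ω).2 := by
    funext b
    rw [law_comp μ F Prod.snd, hF, law_snd]
  rw [MIq, sub_mul, add_mul, Hq_mul_log, Hq_mul_log, Hq_mul_log, h1, h2, hF]

lemma entropy_uniform_zmod : entropy (fun _ : ZMod q => (q : ℝ)⁻¹) = log q := by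
  have := cast_q_ne_zero q
  rw [entropy_const, ZMod.card, negMulLog, log_inv]
  field_simp

lemma entropy_uniform_zmod_prod :
    entropy (fun _ : ZMod q × ZMod q => ((q : ℝ) ^ 2)⁻¹) = 2 * log q := by
  have := cast_q_ne_zero q
  rw [entropy_const, Fintype.card_prod, ZMod.card, negMulLog, log_inv, log_pow]
  push_cast
  field_simp

noncomputable def joint (M : MAC q) (s : ZMod q × ZMod q × M.Y) : ℝ :=
  M.P s.1 s.2.1 s.2.2 / (q : ℝ) ^ 2

namespace IsMAC

variable {M : MAC q}

lemma joint_nonneg (hM : IsMAC M) (s : ZMod q × ZMod q × M.Y) : 0 ≤ joint M s :=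
  div_nonneg (hM.1 _ _ _) (by positivity)

lemma law_joint_inputs (hM : IsMAC M) :
    law (joint M) (fun s => (s.1, s.2.1)) = fun _ => ((q : ℝ) ^ 2)⁻¹ := by
  rw [show (fun s : ZMod q × ZMod q × M.Y => (s.1, s.2.1)) =
    fun s => ((Equiv.prodAssoc _ _ _).symm s).1 from rfl, law_comp, law_equiv]
  funext xw
  rw [law_fst]
  simp [joint, ← Finset.sum_div, hM.2]

lemma law_joint_fst (hM : IsMAC M) : law (joint M) Prod.fst = fun _ => (q : ℝ)⁻¹ := by
  have := cast_q_ne_zero q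
  rw [law_comp (joint M) (fun s => (s.1, s.2.1)) Prod.fst, hM.law_joint_inputs]
  funext x
  rw [law_fst]
  simp only [Finset.sum_const, Finset.card_univ, ZMod.card, nsmul_eq_mul]
  field_simp

lemma law_joint_snd_fst (hM : IsMAC M) : law (joint M) (fun s => s.2.1) = fun _ => (q : ℝ)⁻¹ := by
  have := cast_q_ne_zero q
  rw [law_comp (joint M) (fun s => (s.1, s.2.1)) Prod.snd, hM.law_joint_inputs]
  funext w
  rw [law_snd]
  simp only [Finset.sum_const, Finset.card_univ, ZMod.card, nsmul_eq_mul]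
  field_simp

lemma sum_joint (hM : IsMAC M) : ∑ s, joint M s = 1 := by
  rw [← sum_law (joint M) Prod.fst, hM.law_joint_fst]
  simp [cast_q_ne_zero q]

variable {Ω : Type*} [Fintype Ω] {μ : Ω → ℝ} {F : Ω → ZMod q × ZMod q × M.Y}

lemma I1_mul_log (hM : IsMAC M) (hF : law μ F = joint M) :
    I1 q M * log q = log q + entropy (law μ fun ω => (F ω).2) - entropy (law μ F) := by
  rw [I1, MIq_mul_log (p := fun (x : ZMod q) (wy : ZMod q × M.Y) => M.P x wy.1 wy.2 / (q : ℝ) ^ 2)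
    hF, law_comp μ F Prod.fst, hF, hM.law_joint_fst, entropy_uniform_zmod]

lemma I2_mul_log (hM : IsMAC M) (hF : law μ F = joint M) :
    I2 q M * log q = log q + entropy (law μ fun ω => ((F ω).1, (F ω).2.2)) -
      entropy (law μ F) := by
  let e : ZMod q × ZMod q × M.Y ≃ ZMod q × ZMod q × M.Y :=
    ⟨fun s => (s.2.1, s.1, s.2.2), fun s => (s.2.1, s.1, s.2.2), fun _ => rfl, fun _ => rfl⟩
  have he : law μ (fun ω => e (F ω)) = fun ab => M.P ab.2.1 ab.1 ab.2.2 / (q : ℝ) ^ 2 := by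
    rw [law_comp, hF, law_equiv]
    rfl
  rw [I2, MIq_mul_log he, entropy_law_equiv μ F e]
  simp only [e, Equiv.coe_fn_mk]
  rw [law_comp μ F fun s => s.2.1, hF, hM.law_joint_snd_fst, entropy_uniform_zmod]

lemma I12_mul_log (hM : IsMAC M) (hF : law μ F = joint M) :
    I12 q M * log q = 2 * log q + entropy (law μ fun ω => (F ω).2.2) - entropy (law μ F) := by
  let e := (Equiv.prodAssoc (ZMod q) (ZMod q) M.Y).symm
  have he : law μ (fun ω => e (F ω)) = fun ab => M.P ab.1.1 ab.1.2 ab.2 / (q : ℝ) ^ 2 := by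
    rw [law_comp, hF, law_equiv]
    rfl
  rw [I12, MIq_mul_log he, entropy_law_equiv μ F e]
  simp only [e, Equiv.prodAssoc_symm_apply]
  rw [law_comp μ F fun s => (s.1, s.2.1), hF, hM.law_joint_inputs, entropy_uniform_zmod_prod]

lemma I1_nonneg (hM : IsMAC M) : 0 ≤ I1 q M := by
  have h1 := hM.I1_mul_log (F := fun s => s) (law_id _)
  have hsub : entropy (law (joint M) fun s => s) ≤ entropy (law (joint M) Prod.fst) +
      entropy (law (joint M) fun s => s.2) :=
    entropy_law_subadditive hM.joint_nonneg hM.sum_joint Prod.fst Prod.snd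
  rw [hM.law_joint_fst, entropy_uniform_zmod] at hsub
  exact le_of_mul_le_mul_right (by linarith) (log_q_pos q)

lemma I1_le_I12 (hM : IsMAC M) : I1 q M ≤ I12 q M := by
  have h1 := hM.I1_mul_log (F := fun s => s) (law_id _)
  have h12 := hM.I12_mul_log (F := fun s => s) (law_id _)
  have hsub : entropy (law (joint M) fun s => s.2) ≤ entropy (law (joint M) fun s => s.2.1) +
      entropy (law (joint M) fun s => s.2.2) :=
    entropy_law_subadditive hM.joint_nonneg hM.sum_joint _ _
  rw [hM.law_joint_snd_fst, entropy_uniform_zmod] at hsub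
  exact le_of_mul_le_mul_right (by linarith) (log_q_pos q)

lemma I12_le_I1_add_I2 (hM : IsMAC M) : I12 q M ≤ I1 q M + I2 q M := by
  have h1 := hM.I1_mul_log (F := fun s => s) (law_id _)
  have h2 := hM.I2_mul_log (F := fun s => s) (law_id _)
  have h12 := hM.I12_mul_log (F := fun s => s) (law_id _)
  have hsub := entropy_law_submodular hM.joint_nonneg (fun s => s.1) (fun s => s.2.2)
    fun s => s.2.1
  rw [entropy_law_eq_of_comp hM.joint_nonneg (G := fun s => s) (fun s => (s.1, s.2.2, s.2.1))
      (fun x => (x.1, x.2.2, x.2.1)) (fun _ => rfl) (fun _ => rfl),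
    entropy_law_eq_of_comp hM.joint_nonneg (G := fun s => s.2) (fun x => (x.2, x.1))
      (fun x => (x.2, x.1)) (fun _ => rfl) (fun _ => rfl)] at hsub
  exact le_of_mul_le_mul_right (by linarith) (log_q_pos q)

lemma corner_mem_rateRegion (hM : IsMAC M) : (I1 q M, I12 q M - I1 q M) ∈ rateRegion q M :=
  ⟨hM.I1_nonneg, le_rfl, sub_nonneg.2 hM.I1_le_I12, by linarith [hM.I12_le_I1_add_I2],
    by simp⟩

lemma sum_output_pair (hM : IsMAC M) (x w x' w' : ZMod q) :
    ∑ y : M.Y × M.Y, M.P x w y.1 * M.P x' w' y.2 = 1 := by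
  simp [Fintype.sum_prod_type, ← Finset.mul_sum, hM.2]

end IsMAC

lemma half_add_mem_rateRegion {M M₁ M₂ : MAC q} (h1 : I1 q M₁ + I1 q M₂ ≤ 2 * I1 q M)
    (h2 : I2 q M₁ + I2 q M₂ ≤ 2 * I2 q M) (h12 : I12 q M₁ + I12 q M₂ ≤ 2 * I12 q M)
    {a b : ℝ × ℝ} (ha : a ∈ rateRegion q M₁) (hb : b ∈ rateRegion q M₂) :
    (1 / 2 : ℝ) • a + (1 / 2 : ℝ) • b ∈ rateRegion q M := by
  obtain ⟨ha1, ha2, ha3, ha4, ha5⟩ := ha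
  obtain ⟨hb1, hb2, hb3, hb4, hb5⟩ := hb
  refine ⟨?_, ?_, ?_, ?_, ?_⟩ <;>
    simp only [Prod.fst_add, Prod.snd_add, Prod.smul_fst, Prod.smul_snd, smul_eq_mul] <;> linarith

end Channel

section Polar

variable {q} {M : MAC q}

lemma isMAC_minusT (hM : IsMAC M) : IsMAC (minusT q M) := by
  refine ⟨fun u v y => mul_nonneg (by positivity) (Finset.sum_nonneg fun _ _ =>
    Finset.sum_nonneg fun _ _ => mul_nonneg (hM.1 _ _ _) (hM.1 _ _ _)), fun u v => ?_⟩
  calc ∑ y, (minusT q M).P u v y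
      = ((q : ℝ) ^ 2)⁻¹ * ∑ u₂, ∑ v₂, ∑ y : M.Y × M.Y,
          M.P (u + u₂) (v + v₂) y.1 * M.P u₂ v₂ y.2 := by
        simp only [minusT, ← Finset.mul_sum]
        rw [Finset.sum_comm]
        exact congrArg _ (Finset.sum_congr rfl fun _ _ => Finset.sum_comm)
    _ = 1 := by
        simp only [hM.sum_output_pair, Finset.sum_const, Finset.card_univ, ZMod.card, nsmul_eq_mul,
          mul_one]
        field_simp [cast_q_ne_zero q]

lemma isMAC_plusT (hM : IsMAC M) : IsMAC (plusT q M) := by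
  refine ⟨fun u v z => mul_nonneg (by positivity) (mul_nonneg (hM.1 _ _ _) (hM.1 _ _ _)),
    fun u v => ?_⟩
  calc ∑ z, (plusT q M).P u v z
      = ((q : ℝ) ^ 2)⁻¹ * ∑ uv : ZMod q × ZMod q, ∑ y : M.Y × M.Y,
          M.P (uv.1 + u) (uv.2 + v) y.1 * M.P u v y.2 := by
        simp only [plusT, ← Finset.mul_sum]
        exact congrArg _ ((Fintype.sum_prod_type _).trans Finset.sum_comm)
    _ = 1 := by
        simp only [hM.sum_output_pair, Finset.sum_const, Finset.card_univ, Fintype.card_prod,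
          ZMod.card, nsmul_eq_mul, Nat.cast_mul, mul_one]
        field_simp [cast_q_ne_zero q]

noncomputable def jointPair (M : MAC q) : (ZMod q × ZMod q × M.Y) × (ZMod q × ZMod q × M.Y) → ℝ :=
  fun ω => joint M ω.1 * joint M ω.2

def minusTriple (ω : (ZMod q × ZMod q × M.Y) × (ZMod q × ZMod q × M.Y)) :
    ZMod q × ZMod q × (minusT q M).Y :=
  (ω.1.1 - ω.2.1, ω.1.2.1 - ω.2.2.1, (ω.1.2.2, ω.2.2.2))

def plusTriple (ω : (ZMod q × ZMod q × M.Y) × (ZMod q × ZMod q × M.Y)) :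
    ZMod q × ZMod q × (plusT q M).Y :=
  (ω.2.1, ω.2.2.1, ((ω.1.2.2, ω.2.2.2), (ω.1.1 - ω.2.1, ω.1.2.1 - ω.2.2.1)))

lemma minusTriple_eq_iff (ω₁ ω₂ : ZMod q × ZMod q × M.Y) (u v : ZMod q) (y : (minusT q M).Y) :
    minusTriple (ω₁, ω₂) = (u, v, y) ↔ ω₁ = (u + ω₂.1, v + ω₂.2.1, y.1) ∧ ω₂.2.2 = y.2 := by
  obtain ⟨x₁, w₁, y₁⟩ := ω₁
  obtain ⟨x₂, w₂, y₂⟩ := ω₂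
  obtain ⟨c, d⟩ := y
  show ((x₁ - x₂, w₁ - w₂, y₁, y₂) : ZMod q × ZMod q × M.Y × M.Y) = (u, v, c, d) ↔ _
  simp [Prod.ext_iff, sub_eq_iff_eq_add, and_assoc]

lemma plusTriple_eq_iff (ω₁ ω₂ : ZMod q × ZMod q × M.Y) (u v : ZMod q) (z : (plusT q M).Y) :
    plusTriple (ω₁, ω₂) = (u, v, z) ↔
      ω₁ = (z.2.1 + u, z.2.2 + v, z.1.1) ∧ ω₂ = (u, v, z.1.2) := by
  obtain ⟨x₁, w₁, y₁⟩ := ω₁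
  obtain ⟨x₂, w₂, y₂⟩ := ω₂
  simp only [plusTriple, Prod.ext_iff]
  aesop

lemma law_minusTriple : law (jointPair M) minusTriple = joint (minusT q M) := by
  classical
  funext ⟨u, v, y⟩
  rw [law_apply, Fintype.sum_prod_type, Finset.sum_comm]
  simp only [minusTriple_eq_iff, ite_and, Finset.sum_ite_eq', Finset.mem_univ, if_true, jointPair]
  simp only [Fintype.sum_prod_type, Finset.sum_ite_eq', Finset.mem_univ, if_true, joint, minusT,
    Finset.mul_sum, Finset.sum_div]
  refine Finset.sum_congr rfl fun _ _ => Finset.sum_congr rfl fun _ _ => ?_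
  ring

lemma law_plusTriple : law (jointPair M) plusTriple = joint (plusT q M) := by
  classical
  funext ⟨u, v, z⟩
  rw [law_apply, Fintype.sum_prod_type]
  simp only [plusTriple_eq_iff, ite_and, Finset.sum_ite_irrel, Finset.sum_const_zero,
    Finset.sum_ite_eq', Finset.mem_univ, if_true]
  simp only [jointPair, joint, plusT]
  ring

lemma jointPair_nonneg (hM : IsMAC M) (ω : (ZMod q × ZMod q × M.Y) × (ZMod q × ZMod q × M.Y)) :
    0 ≤ jointPair M ω :=
  mul_nonneg (hM.joint_nonneg _) (hM.joint_nonneg _)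

lemma entropy_law_jointPair {α : Type*} [Fintype α] (hM : IsMAC M)
    (f : ZMod q × ZMod q × M.Y → α) :
    entropy (law (jointPair M) (Prod.map f f)) = 2 * entropy (law (joint M) f) :=
  (entropy_law_prodMap hM.sum_joint hM.sum_joint f f).trans (two_mul _).symm

lemma entropy_law_plusTriple (hM : IsMAC M) :
    entropy (law (jointPair M) plusTriple) = 2 * entropy (law (joint M) fun s => s) := by
  rw [← entropy_law_jointPair hM]
  exact entropy_law_eq_of_comp (jointPair_nonneg hM) plusTriple
    (fun z : ZMod q × ZMod q × (plusT q M).Y =>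
      ((z.2.2.2.1 + z.1, z.2.2.2.2 + z.2.1, z.2.2.1.1), (z.1, z.2.1, z.2.2.1.2)))
    (fun _ => rfl) (fun _ => by simp [plusTriple])

lemma I1_minusT_add_I1_plusT_le (hM : IsMAC M) :
    I1 q (minusT q M) + I1 q (plusT q M) ≤ 2 * I1 q M := by
  have hμ := jointPair_nonneg hM
  have hm := (isMAC_minusT hM).I1_mul_log law_minusTriple
  have hp := (isMAC_plusT hM).I1_mul_log law_plusTriple
  have h := hM.I1_mul_log (F := fun s => s) (law_id _)
  -- `I(U₁; V₁Y₁Y₂) ≤ I(U₁; V₁Y₁Y₂V₂)`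
  have hsub := entropy_law_submodular hμ (fun ω => (minusTriple ω).1) (fun ω => (minusTriple ω).2)
    fun ω => ω.2.2.1
  have e1 : entropy (law (jointPair M) fun ω => (plusTriple ω).2) =
      entropy (law (jointPair M) fun ω => ((minusTriple ω).1, (minusTriple ω).2, ω.2.2.1)) :=
    entropy_law_eq_of_comp hμ (fun x => (x.2.2, x.2.1.2, x.1, x.2.1.1))
      (fun z => (z.2.2.1, (z.2.2.2, z.2.1), z.1)) (fun _ => rfl) (fun _ => rfl)
  have e2 : entropy (law (jointPair M) fun ω => ((minusTriple ω).2, ω.2.2.1)) =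
      2 * entropy (law (joint M) fun s => s.2) := by
    rw [← entropy_law_jointPair hM]
    exact entropy_law_eq_of_comp hμ
      (fun z : (ZMod q × M.Y) × ZMod q × M.Y => ((z.1.1 - z.2.1, (z.1.2, z.2.2)), z.2.1))
      (fun x => ((x.1.1 + x.2, x.1.2.1), (x.2, x.1.2.2))) (fun _ => rfl)
      (fun _ => by simp [minusTriple, Prod.map])
  have e3 : entropy (law (jointPair M) fun ω => ((minusTriple ω).1, (minusTriple ω).2)) =
      entropy (law (jointPair M) minusTriple) := rfl
  have e4 := entropy_law_plusTriple hM
  have : (I1 q (minusT q M) + I1 q (plusT q M)) * log q ≤ 2 * I1 q M * log q := by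
    rw [add_mul, hm, hp, mul_assoc, h]
    linarith
  exact le_of_mul_le_mul_right this (log_q_pos q)

lemma I2_minusT_add_I2_plusT_le (hM : IsMAC M) :
    I2 q (minusT q M) + I2 q (plusT q M) ≤ 2 * I2 q M := by
  have hμ := jointPair_nonneg hM
  have hm := (isMAC_minusT hM).I2_mul_log law_minusTriple
  have hp := (isMAC_plusT hM).I2_mul_log law_plusTriple
  have h := hM.I2_mul_log (F := fun s => s) (law_id _)
  -- `I(V₁; U₁Y₁Y₂) ≤ I(V₁; U₁Y₁Y₂U₂)`
  have hsub := entropy_law_submodular hμ (fun ω => (minusTriple ω).2.1)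
    (fun ω => ((minusTriple ω).1, (minusTriple ω).2.2)) fun ω => ω.2.1
  have e1 : entropy (law (jointPair M) fun ω => ((plusTriple ω).1, (plusTriple ω).2.2)) =
      entropy (law (jointPair M) fun ω =>
        ((minusTriple ω).2.1, ((minusTriple ω).1, (minusTriple ω).2.2), ω.2.1)) :=
    entropy_law_eq_of_comp hμ (fun x => (x.2.2, x.2.1.2, x.2.1.1, x.1))
      (fun z => (z.2.2.2, (z.2.2.1, z.2.1), z.1)) (fun _ => rfl) (fun _ => rfl)
  have e2 : entropy (law (jointPair M) fun ω => (((minusTriple ω).1, (minusTriple ω).2.2), ω.2.1)) =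
      2 * entropy (law (joint M) fun s => (s.1, s.2.2)) := by
    rw [← entropy_law_jointPair hM]
    exact entropy_law_eq_of_comp hμ
      (fun z : (ZMod q × M.Y) × ZMod q × M.Y => ((z.1.1 - z.2.1, (z.1.2, z.2.2)), z.2.1))
      (fun x => ((x.1.1 + x.2, x.1.2.1), (x.2, x.1.2.2))) (fun _ => rfl)
      (fun _ => by simp [minusTriple, Prod.map])
  have e3 : entropy (law (jointPair M) fun ω =>
      ((minusTriple ω).2.1, (minusTriple ω).1, (minusTriple ω).2.2)) =
      entropy (law (jointPair M) minusTriple) :=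
    entropy_law_eq_of_comp hμ (fun x => (x.2.1, x.1, x.2.2)) (fun z => (z.2.1, z.1, z.2.2))
      (fun _ => rfl) (fun _ => rfl)
  have e4 := entropy_law_plusTriple hM
  have : (I2 q (minusT q M) + I2 q (plusT q M)) * log q ≤ 2 * I2 q M * log q := by
    rw [add_mul, hm, hp, mul_assoc, h]
    linarith
  exact le_of_mul_le_mul_right this (log_q_pos q)

lemma I12_minusT_add_I12_plusT (hM : IsMAC M) :
    I12 q (minusT q M) + I12 q (plusT q M) = 2 * I12 q M := by
  have hm := (isMAC_minusT hM).I12_mul_log law_minusTriple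
  have hp := (isMAC_plusT hM).I12_mul_log law_plusTriple
  have h := hM.I12_mul_log (F := fun s => s) (law_id _)
  have e1 : entropy (law (jointPair M) fun ω => (minusTriple ω).2.2) =
      2 * entropy (law (joint M) fun s => s.2.2) :=
    entropy_law_jointPair hM fun s => s.2.2
  have e2 : entropy (law (jointPair M) fun ω => (plusTriple ω).2.2) =
      entropy (law (jointPair M) minusTriple) :=
    entropy_law_eq_of_comp (jointPair_nonneg hM) (fun x => (x.2.2, x.1, x.2.1))
      (fun z => (z.2.1, z.2.2, z.1)) (fun _ => rfl) (fun _ => rfl)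
  have e3 := entropy_law_plusTriple hM
  have : (I12 q (minusT q M) + I12 q (plusT q M)) * log q = 2 * I12 q M * log q := by
    rw [add_mul, hm, hp, mul_assoc, h]
    linarith
  exact mul_right_cancel₀ (log_q_pos q).ne' this

end Polar

/-- `½ 𝕀(P⁻) + ½ 𝕀(P⁺) ⊆ 𝕀(P)`, and the set sum contains a point on the dominant
face of `𝕀(P)` (a point with `R₁ + R₂ = I⁽¹²⁾(P)`). -/
theorem half_sum_regions (q : ℕ) [Fact (Nat.Prime q)] (M : MAC q) (hM : IsMAC M) :
    {r : ℝ × ℝ | ∃ a ∈ rateRegion q (minusT q M), ∃ b ∈ rateRegion q (plusT q M),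
        r = (1 / 2 : ℝ) • a + (1 / 2 : ℝ) • b} ⊆ rateRegion q M ∧
    ∃ r : ℝ × ℝ,
      (∃ a ∈ rateRegion q (minusT q M), ∃ b ∈ rateRegion q (plusT q M),
        r = (1 / 2 : ℝ) • a + (1 / 2 : ℝ) • b) ∧
      r.1 + r.2 = I12 q M := by
  have h12 := I12_minusT_add_I12_plusT hM
  refine ⟨?_, _, ⟨_, (isMAC_minusT hM).corner_mem_rateRegion, _,
    (isMAC_plusT hM).corner_mem_rateRegion, rfl⟩, ?_⟩
  · rintro r ⟨a, ha, b, hb, rfl⟩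
    exact half_add_mem_rateRegion (I1_minusT_add_I1_plusT_le hM) (I2_minusT_add_I2_plusT_le hM)
      h12.le ha hb
  · simp only [Prod.fst_add, Prod.snd_add, Prod.smul_fst, Prod.smul_snd, smul_eq_mul]
    linarith

end PolarMAC
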